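/- arXiv:2401.04101 — 2 statements merged into one kernel-verified Lean document; each statement's English description precedes it below -/
import Mathlib

section
/- For integers ℓ ≥ 1 and k ≥ 2, the star ℓ-set transposition graph ST^ℓ_k is triangle-free: it contains no set of three pairwise adjacent vertices (so its girth is greater than 3 whenever it contains a cycle). -/
/-- An ℓ-set permutation: a string of length `k * l` over the alphabet `Fin k`
in which every symbol occurs exactly `l` times. -/
abbrev LSetPerm (k l : ℕ) : Type :=
  {v : Fin (k * l) → Fin k // ∀ j : Fin k, (Finset.univ.filter fun x => v x = j).card = l}

/-- The star ℓ-set transposition graph `ST^ℓ_k`: vertices are the ℓ-set permutations,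
with `v` adjacent to `w` iff `w` is obtained from `v` by transposing the first entry
with an entry of differing value. -/
def STGraph (k l : ℕ) [NeZero (k * l)] : SimpleGraph (LSetPerm k l) :=
  SimpleGraph.fromRel fun v w =>
    ∃ h : Fin (k * l), h ≠ 0 ∧ v.1 h ≠ v.1 0 ∧ w.1 = v.1 ∘ (Equiv.swap 0 h)

private lemma adj_rep {k l : ℕ} [NeZero (k * l)] {v w : LSetPerm k l}
    (h : (STGraph k l).Adj v w) :
    ∃ t : Fin (k * l), t ≠ 0 ∧ v.1 t ≠ v.1 0 ∧ w.1 = v.1 ∘ (Equiv.swap 0 t) := by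
  rcases h with ⟨hne, h | h⟩
  · exact h
  · obtain ⟨t, ht0, htv, hv⟩ := h
    refine ⟨t, ht0, ?_, ?_⟩
    · have h1 : v.1 t = w.1 0 := by rw [hv]; simp
      have h2 : v.1 0 = w.1 t := by rw [hv]; simp
      rw [h1, h2]; exact fun h => htv h.symm
    · funext x
      rw [hv]
      simp [Function.comp]

/-- `ST^ℓ_k` is triangle-free: it contains no set of three pairwise
adjacent vertices. -/
theorem ST_triangleFree (k l : ℕ) (hl : 1 ≤ l) (hk : 2 ≤ k) :
    letI : NeZero (k * l) := ⟨Nat.mul_ne_zero (by omega) (by omega)⟩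
    (STGraph k l).CliqueFree 3 := by
  letI : NeZero (k * l) := ⟨Nat.mul_ne_zero (by omega) (by omega)⟩
  intro s hs
  rw [SimpleGraph.is3Clique_iff] at hs
  obtain ⟨a, b, c, hab, hac, hbc, -⟩ := hs
  obtain ⟨x, hx0, hxv, hb⟩ := adj_rep hab
  obtain ⟨y, hy0, hyv, hc⟩ := adj_rep hac
  obtain ⟨z, hz0, hzv, hc'⟩ := adj_rep hbc
  -- b.1 = a.1 ∘ swap 0 x, c.1 = a.1 ∘ swap 0 y, c.1 = b.1 ∘ swap 0 z
  have hg0 : b.1 0 = a.1 x := by rw [hb]; simp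
  by_cases hzx : z = x
  · -- h 0 = g z = g x = f 0, but h 0 = f y
    subst hzx
    have hgz : b.1 z = a.1 0 := by rw [hb]; simp
    have h1 : c.1 0 = b.1 z := by rw [hc']; simp
    have h2 : c.1 0 = a.1 y := by rw [hc]; simp
    exact hyv (by rw [← h2, h1, hgz])
  by_cases hzy : z = y
  · -- h y = g 0 = f x, but h y = f 0
    subst hzy
    have h1 : c.1 z = b.1 0 := by rw [hc']; simp
    have h2 : c.1 z = a.1 0 := by rw [hc]; simp
    exact hxv (by rw [← hg0, ← h1, h2])
  · -- z ∉ {x,y}: h z = g 0 = f x and h z = f z; but g z = f z ≠ g 0 = f x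
    have hgz : b.1 z = a.1 z := by
      rw [hb]; simp [Equiv.swap_apply_of_ne_of_ne hz0 hzx]
    have h1 : c.1 z = b.1 0 := by rw [hc']; simp
    have h2 : c.1 z = a.1 z := by
      rw [hc]; simp [Equiv.swap_apply_of_ne_of_ne hz0 hzy]
    exact hzv (by rw [hgz, hg0, ← h2, h1, hg0])
end

section
/- Let k ≥ 2 and ℓ = 2, and let i be a position with i ≠ 0. Then Σ_i = {v : v i = v 0} is an efficient dominating set (1-perfect code) of ST^2_k: Σ_i is independent and every vertex v with v i ≠ v 0 has exactly one neighbor in Σ_i. -/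
lemma lsetperm_comp {k l : ℕ} (v : Fin (k * l) → Fin k)
    (hv : ∀ j : Fin k, (Finset.univ.filter fun x => v x = j).card = l)
    (e : Equiv.Perm (Fin (k * l))) :
    ∀ j : Fin k, (Finset.univ.filter fun x => (v ∘ e) x = j).card = l := by
  intro j
  calc (Finset.univ.filter fun x => (v ∘ e) x = j).card
      = (Finset.univ.filter fun x => v x = j).card :=
        Finset.card_equiv e (by intro x; simp)
    _ = l := hv j

/-- for `ℓ = 2` and a position `i ≠ 0`, the set `Σ_i = {v : v i = v 0}`
is an efficient dominating set (1-perfect code) of `ST^2_k`: it is independent and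
every vertex `v` with `v i ≠ v 0` has exactly one neighbor in `Σ_i`. -/
theorem ST_Sigma_perfect_code (k : ℕ) (hk : 2 ≤ k) :
    letI : NeZero (k * 2) := ⟨Nat.mul_ne_zero (by omega) (by omega)⟩
    ∀ i : Fin (k * 2), i ≠ 0 →
      (∀ v w : LSetPerm k 2, v.1 i = v.1 0 → w.1 i = w.1 0 → ¬ (STGraph k 2).Adj v w) ∧
      (∀ v : LSetPerm k 2, v.1 i ≠ v.1 0 →
        {w : LSetPerm k 2 | (STGraph k 2).Adj v w ∧ w.1 i = w.1 0}.ncard = 1) := by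
  letI : NeZero (k * 2) := ⟨Nat.mul_ne_zero (by omega) (by omega)⟩
  intro i hi
  -- a helper: canonical form of adjacency
  have adj_iff : ∀ v w : LSetPerm k 2, (STGraph k 2).Adj v w ↔
      ∃ h : Fin (k * 2), h ≠ 0 ∧ v.1 h ≠ v.1 0 ∧ w.1 = v.1 ∘ (Equiv.swap 0 h) := by
    intro v w
    rw [STGraph, SimpleGraph.fromRel_adj]
    constructor
    · rintro ⟨hne, ⟨h, h0, hvh, hw⟩ | ⟨h, h0, hwh, hv'⟩⟩
      · exact ⟨h, h0, hvh, hw⟩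
      · refine ⟨h, h0, ?_, ?_⟩
        · rw [hv']
          simp only [Function.comp_apply, Equiv.swap_apply_left, Equiv.swap_apply_right]
          exact fun e => hwh e.symm
        · rw [hv']; funext x; simp [Equiv.swap_apply_self]
    · rintro ⟨h, h0, hvh, hw⟩
      refine ⟨?_, Or.inl ⟨h, h0, hvh, hw⟩⟩
      intro e
      have h0' : w.1 0 = v.1 h := by rw [hw]; simp
      exact hvh ((congrArg (fun u => u.1 0) e).trans h0').symm
  constructor
  · rintro v w hv hw hadj
    rw [adj_iff] at hadj
    obtain ⟨h, h0, hvh, hw'⟩ := hadj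
    have hih : h ≠ i := fun e => hvh (e ▸ hv)
    have h1 : w.1 i = v.1 i := by
      rw [hw']
      simp [Equiv.swap_apply_of_ne_of_ne hi hih.symm ..]
    have h2 : w.1 0 = v.1 h := by rw [hw']; simp
    rw [h1, h2, hv] at hw
    exact hvh hw.symm
  · intro v hvi
    set j := v.1 i with hj
    have hcard : (Finset.univ.filter fun x => v.1 x = j).card = 2 := v.2 j
    have himem : i ∈ Finset.univ.filter fun x => v.1 x = j := by simp [hj]
    have herase : ((Finset.univ.filter fun x => v.1 x = j).erase i).card = 1 := by
      rw [Finset.card_erase_of_mem himem, hcard]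
    obtain ⟨h₀, hh₀⟩ := Finset.card_eq_one.mp herase
    have hh₀mem : h₀ ∈ (Finset.univ.filter fun x => v.1 x = j).erase i := by
      rw [hh₀]; simp
    have hh₀i : h₀ ≠ i := (Finset.mem_erase.mp hh₀mem).1
    have hvh₀ : v.1 h₀ = j := by
      have := (Finset.mem_erase.mp hh₀mem).2
      simpa using this
    have hh₀0 : h₀ ≠ 0 := by
      intro e
      apply hvi
      rw [← hvh₀, e]
    have huniq : ∀ h : Fin (k * 2), h ≠ i → v.1 h = j → h = h₀ := by
      intro h hhi hvh
      have : h ∈ (Finset.univ.filter fun x => v.1 x = j).erase i :=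
        Finset.mem_erase.mpr ⟨hhi, by simp [hvh]⟩
      rw [hh₀] at this
      simpa using this
    set w₀ : LSetPerm k 2 := ⟨v.1 ∘ Equiv.swap 0 h₀, lsetperm_comp v.1 v.2 _⟩ with hw₀
    have hset : {w : LSetPerm k 2 | (STGraph k 2).Adj v w ∧ w.1 i = w.1 0} = {w₀} := by
      ext w
      simp only [Set.mem_setOf_eq, Set.mem_singleton_iff]
      constructor
      · rintro ⟨hadj, hwi⟩
        rw [adj_iff] at hadj
        obtain ⟨h, h0, hvh, hw'⟩ := hadj
        have hw0 : w.1 0 = v.1 h := by rw [hw']; simp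
        have hhi : h ≠ i := by
          intro e
          subst e
          have : w.1 h = v.1 0 := by rw [hw']; simp
          rw [this, hw0] at hwi
          exact hvh hwi.symm
        have hwi' : w.1 i = v.1 i := by
          rw [hw']
          simp [Equiv.swap_apply_of_ne_of_ne hi hhi.symm ..]
        have : v.1 h = j := by rw [← hw0, ← hwi, hwi', hj]
        have heq : h = h₀ := huniq h hhi this
        apply Subtype.ext
        rw [hw', heq]
      · rintro rfl
        refine ⟨?_, ?_⟩
        · rw [adj_iff]
          exact ⟨h₀, hh₀0, by rw [hvh₀]; exact fun e => hvi (hj.trans e), rfl⟩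
        · show v.1 (Equiv.swap 0 h₀ i) = v.1 (Equiv.swap 0 h₀ 0)
          rw [Equiv.swap_apply_of_ne_of_ne hi hh₀i.symm, Equiv.swap_apply_left, hvh₀, hj]
    rw [hset, Set.ncard_singleton]
end
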